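/- For every nonnegative integer m and real numbers x and y, one has x^(2m) = Σ_{ℓ=0}^{m} (-1)^ℓ · ⟨y+x⟩_ℓ · ⟨y−x⟩_ℓ · σ_{m,ℓ}(y), where ⟨t⟩_ℓ denotes the falling factorial and σ_{m,ℓ}(y) is the complete homogeneous symmetric polynomial of degree m−ℓ in the quantities (y−j)^2 for j = 0, 1, …, ℓ. -/

import Mathlib

/-!
Since `(-1)^ℓ ⟨y+x⟩_ℓ ⟨y-x⟩_ℓ = ∏_{j<ℓ} (x² - (y-j)²)`, the identity is the Newton expansion
of `t^m` in the basis `∏_{j<ℓ} (t - z_j)`, taken at `t = x²`, `z_j = (y-j)²`. Splitting the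
monotone sequences by whether they reach the top value gives the recursion
`h_{d+1}(z_0,…,z_n) = h_{d+1}(z_0,…,z_{n-1}) + z_n h_d(z_0,…,z_n)`, and together with
`t ∏_{j<ℓ} (t - z_j) = ∏_{j≤ℓ} (t - z_j) + z_ℓ ∏_{j<ℓ} (t - z_j)` it turns `t^{m+1} = t · t^m`
into an induction on `m`.
-/

open Finset

/-- Falling factorial `⟨x⟩_n = x(x-1)⋯(x-n+1)`. -/
noncomputable def ffact (x : ℝ) : ℕ → ℝ
  | 0 => 1
  | n + 1 => ffact x n * (x - n)

/-- `σ_{m,ℓ}(y)`: the complete homogeneous symmetric polynomial of degree `m - ℓ`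
evaluated at `(y-0)^2, (y-1)^2, …, (y-ℓ)^2`, i.e. the sum over weakly increasing
sequences `0 ≤ k_1 ≤ ⋯ ≤ k_{m-ℓ} ≤ ℓ` of `∏ i, (y - k_i)^2`. -/
noncomputable def csigma (m ℓ : ℕ) (y : ℝ) : ℝ :=
  ∑ k ∈ Finset.univ.filter (fun k : Fin (m - ℓ) → Fin (ℓ + 1) => Monotone k),
    ∏ i, (y - (k i : ℝ)) ^ 2

theorem Fin.monotone_snoc {α : Type*} [Preorder α] {d : ℕ} {k : Fin d → α} {x : α}
    (hk : Monotone k) (hx : ∀ i, k i ≤ x) : Monotone (Fin.snoc k x : Fin (d + 1) → α) := by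
  intro a b hab
  induction b using Fin.lastCases with
  | last =>
    induction a using Fin.lastCases with
    | last => exact le_rfl
    | cast a => simpa only [Fin.snoc_castSucc, Fin.snoc_last] using hx a
  | cast b =>
    obtain ⟨a, rfl⟩ := Fin.eq_castSucc_of_ne_last
      (Fin.ne_last_of_lt (lt_of_le_of_lt hab (Fin.castSucc_lt_last b)))
    simpa only [Fin.snoc_castSucc] using hk (Fin.castSucc_le_castSucc_iff.1 hab)

theorem Finset.sum_filter_monotone_fin_succ {M : Type*} [AddCommMonoid M] {d n : ℕ}
    (f : (Fin (d + 1) → Fin (n + 1)) → M) :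
    ∑ k ∈ univ.filter (fun k : Fin (d + 1) → Fin (n + 1) => Monotone k), f k =
      ∑ k ∈ univ.filter (fun k : Fin (d + 1) → Fin n => Monotone k), f (Fin.castSucc ∘ k) +
      ∑ k ∈ univ.filter (fun k : Fin d → Fin (n + 1) => Monotone k),
        f (Fin.snoc k (Fin.last n)) := by
  rw [← sum_filter_not_add_sum_filter _ (fun k => k (Fin.last d) = Fin.last n)]
  congr 1
  · have hne : ∀ k ∈ (univ.filter (fun k : Fin (d + 1) → Fin (n + 1) => Monotone k)).filter
        (fun k => k (Fin.last d) ≠ Fin.last n), ∀ a, k a ≠ Fin.last n := by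
      simp only [mem_filter, mem_univ, true_and]
      exact fun k ⟨hk, hlast⟩ a ha =>
        hlast (le_antisymm (Fin.le_last _) (ha ▸ hk (Fin.le_last a)))
    refine sum_bij' (fun k hk a => (k a).castPred (hne k hk a)) (fun k _ => Fin.castSucc ∘ k)
      ?_ ?_ ?_ ?_ ?_ <;> simp only [mem_filter, mem_univ, true_and]
    · exact fun k hk a b hab => Fin.castPred_le_castPred_iff.2 (hk.1 hab)
    · exact fun k hk => ⟨Fin.strictMono_castSucc.monotone.comp hk, (Fin.castSucc_lt_last _).ne⟩
    -- `Fin.castSucc` and `Fin.castPred` only change the bound: the rest holds by structure eta.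
    all_goals exact fun k hk => rfl
  · refine sum_nbij' Fin.init (fun k => Fin.snoc k (Fin.last n)) ?_ ?_ ?_ ?_ ?_ <;>
      simp only [mem_filter, mem_univ, true_and]
    · exact fun k hk a b hab => hk.1 (Fin.castSucc_le_castSucc_iff.2 hab)
    · exact fun k hk => ⟨Fin.monotone_snoc hk (fun _ => Fin.le_last _), Fin.snoc_last _ _⟩
    · intro k hk; rw [← hk.2, Fin.snoc_init_self]
    · intro k hk; exact Fin.init_snoc _ _
    · intro k hk; rw [← hk.2, Fin.snoc_init_self]

section CompleteHomogeneous

variable {R : Type*} [CommSemiring R]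

/-- `completeHomogeneous z d n` is `h_d (z 0, …, z (n - 1))`. -/
def completeHomogeneous (z : ℕ → R) (d n : ℕ) : R :=
  ∑ k ∈ univ.filter (fun k : Fin d → Fin n => Monotone k), ∏ i, z (k i)

theorem completeHomogeneous_zero_left (z : ℕ → R) (n : ℕ) : completeHomogeneous z 0 n = 1 := by
  simp [completeHomogeneous, Subsingleton.monotone]

theorem completeHomogeneous_succ_zero (z : ℕ → R) (d : ℕ) :
    completeHomogeneous z (d + 1) 0 = 0 := by
  simp [completeHomogeneous]

theorem completeHomogeneous_succ_succ (z : ℕ → R) (d n : ℕ) :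
    completeHomogeneous z (d + 1) (n + 1) =
      completeHomogeneous z (d + 1) n + z n * completeHomogeneous z d (n + 1) := by
  rw [completeHomogeneous, sum_filter_monotone_fin_succ, completeHomogeneous,
    completeHomogeneous, mul_sum]
  congr 1
  refine sum_congr rfl fun k _ => ?_
  rw [Fin.prod_univ_castSucc, Fin.snoc_last, mul_comm]
  simp [Fin.snoc_castSucc]

end CompleteHomogeneous

theorem pow_eq_sum_prod_sub_mul_completeHomogeneous {R : Type*} [CommRing R] (z : ℕ → R)
    (t : R) (m : ℕ) :
    t ^ m = ∑ p ∈ antidiagonal m,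
      (∏ j ∈ range p.1, (t - z j)) * completeHomogeneous z p.2 (p.1 + 1) := by
  induction m with
  | zero => simp [completeHomogeneous_zero_left]
  | succ m ih =>
    set P : ℕ → R := fun ℓ => ∏ j ∈ range ℓ, (t - z j)
    calc t ^ (m + 1)
        = ∑ p ∈ antidiagonal m,
            (P (p.1 + 1) + z p.1 * P p.1) * completeHomogeneous z p.2 (p.1 + 1) := by
          rw [pow_succ, ih, sum_mul]
          refine sum_congr rfl fun p _ => ?_
          simp only [P, prod_range_succ]
          ring
      _ = ∑ p ∈ antidiagonal (m + 1), P p.1 * completeHomogeneous z p.2 p.1 +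
            ∑ p ∈ antidiagonal m, P p.1 * (z p.1 * completeHomogeneous z p.2 (p.1 + 1)) := by
          rw [Nat.sum_antidiagonal_succ, completeHomogeneous_succ_zero, mul_zero, zero_add,
            ← sum_add_distrib]
          exact sum_congr rfl fun p _ => by ring
      _ = ∑ p ∈ antidiagonal (m + 1), P p.1 * completeHomogeneous z p.2 (p.1 + 1) := by
          rw [Nat.sum_antidiagonal_succ', Nat.sum_antidiagonal_succ']
          simp only [completeHomogeneous_zero_left, completeHomogeneous_succ_succ, mul_add,
            sum_add_distrib]
          ring

theorem neg_one_pow_mul_ffact_add_mul_ffact_sub (x y : ℝ) (ℓ : ℕ) :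
    (-1 : ℝ) ^ ℓ * ffact (y + x) ℓ * ffact (y - x) ℓ = ∏ j ∈ range ℓ, (x ^ 2 - (y - j) ^ 2) := by
  induction ℓ with
  | zero => simp [ffact]
  | succ ℓ ih =>
    rw [prod_range_succ, ← ih, ffact, ffact]
    ring

theorem sum_formula_lemma1 (m : ℕ) (x y : ℝ) :
    x ^ (2 * m) =
      ∑ ℓ ∈ Finset.range (m + 1),
        (-1 : ℝ) ^ ℓ * ffact (y + x) ℓ * ffact (y - x) ℓ * csigma m ℓ y := by
  have csigma_eq (ℓ : ℕ) :
      csigma m ℓ y = completeHomogeneous (fun j : ℕ => (y - j) ^ 2) (m - ℓ) (ℓ + 1) := rfl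
  rw [pow_mul, pow_eq_sum_prod_sub_mul_completeHomogeneous (fun j : ℕ => (y - j) ^ 2),
    Nat.sum_antidiagonal_eq_sum_range_succ_mk]
  exact sum_congr rfl fun ℓ _ => by rw [neg_one_pow_mul_ffact_add_mul_ffact_sub, csigma_eq]
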